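/- arXiv:0705.1270 — 2 statements merged into one kernel-verified Lean document; each statement's English description precedes it below -/
import Mathlib

section
/- (Theorem B.1(iv)) Suppose the sequential randomization assumption holds: A(j) ⟂ X | (Ā(j-1), L̄(j)) for all j = 0,...,K, where X = (V, (L̄_{ā(K)}(K+1))_{ā(K)}) is the full data. Then for every t with s-1 ≤ t ≤ K and every j with t-s+1 ≤ j ≤ t, the t-specific SRA holds: A^t(j) ⟂ X^t | (Ā^t(t-s+1, j-1), L̄^t(t-s+1, j)), where X^t = (V, Ā(t-s), X_L^t) and X_L^t = (L̄_{ā(t-s+1,t)}(t+1))_{ā(t-s+1,t)} is a measurable function of X. -/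
open Finset
open scoped Classical

noncomputable section

def pr {Ω : Type} [Fintype Ω] (μ : Ω → ℝ) (E : Ω → Prop) : ℝ :=
  ∑ ω, if E ω then μ ω else 0

def cpr {Ω : Type} [Fintype Ω] (μ : Ω → ℝ) (E F : Ω → Prop) : ℝ :=
  pr μ (fun ω => E ω ∧ F ω) / pr μ F

def ex {Ω : Type} [Fintype Ω] (μ : Ω → ℝ) (f : Ω → ℝ) : ℝ :=
  ∑ ω, f ω * μ ω

def cex {Ω : Type} [Fintype Ω] (μ : Ω → ℝ) (f : Ω → ℝ) (F : Ω → Prop) : ℝ :=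
  (∑ ω, if F ω then f ω * μ ω else 0) / pr μ F

/-- t-specific observed history event (values of `(Ā^t(t-s+1,j-1), L̄^t(t-s+1,j))`,
where `L^t(t-s+1) = (Ā(t-s), L̄(t-s+1))`). -/
def tHist {Ω 𝒜 ℒ : Type} (A : ℕ → Ω → 𝒜) (L : ℕ → Ω → ℒ)
    (s t j : ℕ) (ab : ℕ → 𝒜) (lb : ℕ → ℒ) : Ω → Prop := fun ω =>
  (∀ i, t + 1 - s ≤ i → i < j → A i ω = ab i) ∧
  ((∀ i, i < t + 1 - s → A i ω = ab i) ∧ (∀ i, i ≤ t + 1 - s → L i ω = lb i)) ∧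
  (∀ i, t + 1 - s < i → i ≤ j → L i ω = lb i)

/-- The event that the t-specific full data
`X^t = (V, Ā(t-s), (L̄_{Ā(t-s),ā(t-s+1,t)}(t+1))_ā)` takes a given value. -/
def XtEq {Ω 𝒜 ℒ 𝒱 : Type} (A : ℕ → Ω → 𝒜) (CL : (ℕ → 𝒜) → ℕ → Ω → ℒ) (Vv : Ω → 𝒱)
    (s t : ℕ) (v : 𝒱) (ap : ℕ → 𝒜) (xl : (ℕ → 𝒜) → ℕ → ℒ) : Ω → Prop := fun ω =>
  Vv ω = v ∧ (∀ i, i < t + 1 - s → A i ω = ap i) ∧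
  (∀ (ar : ℕ → 𝒜) (jj : ℕ), jj ≤ t + 1 →
    CL (fun i => if i < t + 1 - s then A i ω else ar i) jj ω = xl ar jj)

/-! Once the observed history up to time `j` is fixed, the `t`-specific history is the ordinary
one, and since it fixes the past treatments `Ā(t-s)`, the event `X^t = x^t` becomes the event
that the full data `X` lies in a set determined by `x^t` and that history. Conditional
independence of `A(j)` and `X` given the history thus passes to `X^t`, by summing the
factorisation over the values of `X` in that set. -/

section FiniteProbability

variable {Ω β : Type} [Fintype Ω] (μ : Ω → ℝ)

lemma cpr_congr_of_cond {E E' F : Ω → Prop} (h : ∀ ω, F ω → (E ω ↔ E' ω)) :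
    cpr μ E F = cpr μ E' F := by
  unfold cpr
  congr 2
  ext ω
  exact ⟨fun ⟨hE, hF⟩ => ⟨(h ω hF).1 hE, hF⟩, fun ⟨hE, hF⟩ => ⟨(h ω hF).2 hE, hF⟩⟩

lemma cpr_and_mem_eq_sum (E F : Ω → Prop) (D : Ω → β) (S : Set β) :
    cpr μ (fun ω => E ω ∧ D ω ∈ S) F =
      ∑ x ∈ univ.image D with x ∈ S, cpr μ (fun ω => E ω ∧ D ω = x) F := by
  unfold cpr pr
  rw [← Finset.sum_div, Finset.sum_comm]
  congr 1
  refine Finset.sum_congr rfl fun ω _ => ?_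
  by_cases hE : E ω <;> by_cases hF : F ω <;> simp [hE, hF, Finset.sum_ite_eq]

lemma cpr_mem_eq_sum (F : Ω → Prop) (D : Ω → β) (S : Set β) :
    cpr μ (fun ω => D ω ∈ S) F = ∑ x ∈ univ.image D with x ∈ S, cpr μ (fun ω => D ω = x) F := by
  simpa only [true_and] using cpr_and_mem_eq_sum μ (fun _ => True) F D S

lemma cpr_and_mem_eq_mul_of_forall_eq {E F : Ω → Prop} {D : Ω → β}
    (hind : ∀ x, cpr μ (fun ω => E ω ∧ D ω = x) F = cpr μ E F * cpr μ (fun ω => D ω = x) F)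
    (S : Set β) :
    cpr μ (fun ω => E ω ∧ D ω ∈ S) F = cpr μ E F * cpr μ (fun ω => D ω ∈ S) F := by
  rw [cpr_and_mem_eq_sum, cpr_mem_eq_sum, Finset.mul_sum]
  exact Finset.sum_congr rfl fun x _ => hind x

end FiniteProbability

section CounterfactualData

variable {Ω 𝒜 ℒ 𝒱 : Type}

lemma tHist_eq_of_le {A : ℕ → Ω → 𝒜} {L : ℕ → Ω → ℒ} {s t j : ℕ} (hj : t + 1 - s ≤ j)
    (ab : ℕ → 𝒜) (lb : ℕ → ℒ) :
    tHist A L s t j ab lb = fun ω => (∀ i < j, A i ω = ab i) ∧ (∀ i ≤ j, L i ω = lb i) := by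
  ext ω
  constructor
  · rintro ⟨hAt, ⟨hApast, hLpast⟩, hLt⟩
    refine ⟨fun i hi => ?_, fun i hi => ?_⟩
    · rcases lt_or_ge i (t + 1 - s) with hc | hc
      exacts [hApast i hc, hAt i hc hi]
    · rcases le_or_gt i (t + 1 - s) with hc | hc
      exacts [hLpast i hc, hLt i hc hi]
  · rintro ⟨hA, hL⟩
    exact ⟨fun i _ hi => hA i hi,
      ⟨fun i hi => hA i (hi.trans_le hj), fun i hi => hL i (hi.trans hj)⟩, fun i _ hi => hL i hi⟩

def fullData (Vv : Ω → 𝒱) (CL : (ℕ → 𝒜) → ℕ → Ω → ℒ) (ω : Ω) : 𝒱 × ((ℕ → 𝒜) → ℕ → ℒ) :=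
  (Vv ω, fun ar jj => CL ar jj ω)

lemma fullData_eq_iff {Vv : Ω → 𝒱} {CL : (ℕ → 𝒜) → ℕ → Ω → ℒ} {ω : Ω} {v : 𝒱}
    {x : (ℕ → 𝒜) → ℕ → ℒ} :
    fullData Vv CL ω = (v, x) ↔ Vv ω = v ∧ ∀ ar jj, CL ar jj ω = x ar jj := by
  simp [fullData, funext_iff]

def xtEqSet (s t : ℕ) (ab : ℕ → 𝒜) (v : 𝒱) (ap : ℕ → 𝒜) (xl : (ℕ → 𝒜) → ℕ → ℒ) :
    Set (𝒱 × ((ℕ → 𝒜) → ℕ → ℒ)) :=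
  {x | x.1 = v ∧ (∀ i < t + 1 - s, ab i = ap i) ∧
    ∀ ar jj, jj ≤ t + 1 → x.2 (fun i => if i < t + 1 - s then ab i else ar i) jj = xl ar jj}

lemma xtEq_iff_fullData_mem {A : ℕ → Ω → 𝒜} {CL : (ℕ → 𝒜) → ℕ → Ω → ℒ} {Vv : Ω → 𝒱}
    {s t : ℕ} {ab : ℕ → 𝒜} {ω : Ω} (hA : ∀ i < t + 1 - s, A i ω = ab i)
    (v : 𝒱) (ap : ℕ → 𝒜) (xl : (ℕ → 𝒜) → ℕ → ℒ) :
    XtEq A CL Vv s t v ap xl ω ↔ fullData Vv CL ω ∈ xtEqSet s t ab v ap xl := by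
  have hsub : ∀ ar : ℕ → 𝒜, (fun i => if i < t + 1 - s then A i ω else ar i) =
      fun i => if i < t + 1 - s then ab i else ar i := fun ar =>
    funext fun i => by split_ifs with hi; exacts [hA i hi, rfl]
  have hpast : (∀ i < t + 1 - s, A i ω = ap i) ↔ ∀ i < t + 1 - s, ab i = ap i :=
    forall₂_congr fun i hi => by rw [hA i hi]
  simp only [XtEq, xtEqSet, fullData, hsub, hpast]
  rfl

end CounterfactualData

theorem tspecific_SRA_general
    {Ω 𝒜 ℒ 𝒱 : Type} [Fintype Ω]
    (μ : Ω → ℝ)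
    (K s : ℕ)
    (A : ℕ → Ω → 𝒜) (CL : (ℕ → 𝒜) → ℕ → Ω → ℒ) (L : ℕ → Ω → ℒ) (Vv : Ω → 𝒱)
    (SRA : ∀ j ≤ K, ∀ (a : 𝒜) (v : 𝒱) (x : (ℕ → 𝒜) → ℕ → ℒ) (ab : ℕ → 𝒜) (lb : ℕ → ℒ),
      pr μ (fun ω => (∀ i < j, A i ω = ab i) ∧ (∀ i ≤ j, L i ω = lb i)) > 0 →
      cpr μ (fun ω => A j ω = a ∧ (Vv ω = v ∧ ∀ (ar : ℕ → 𝒜) (jj : ℕ), CL ar jj ω = x ar jj))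
        (fun ω => (∀ i < j, A i ω = ab i) ∧ (∀ i ≤ j, L i ω = lb i)) =
      cpr μ (fun ω => A j ω = a)
        (fun ω => (∀ i < j, A i ω = ab i) ∧ (∀ i ≤ j, L i ω = lb i)) *
      cpr μ (fun ω => Vv ω = v ∧ ∀ (ar : ℕ → 𝒜) (jj : ℕ), CL ar jj ω = x ar jj)
        (fun ω => (∀ i < j, A i ω = ab i) ∧ (∀ i ≤ j, L i ω = lb i))) :
    ∀ t, s - 1 ≤ t → t ≤ K → ∀ j, t + 1 - s ≤ j → j ≤ t →
    ∀ (a : 𝒜) (v : 𝒱) (ap : ℕ → 𝒜) (xl : (ℕ → 𝒜) → ℕ → ℒ) (ab : ℕ → 𝒜) (lb : ℕ → ℒ),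
      pr μ (tHist A L s t j ab lb) > 0 →
      cpr μ (fun ω => A j ω = a ∧ XtEq A CL Vv s t v ap xl ω) (tHist A L s t j ab lb) =
      cpr μ (fun ω => A j ω = a) (tHist A L s t j ab lb) *
      cpr μ (XtEq A CL Vv s t v ap xl) (tHist A L s t j ab lb) := by
  intro t _ htK j hj htj a v ap xl ab lb hpos
  rw [tHist_eq_of_le hj] at hpos ⊢
  have hind := SRA j (htj.trans htK) a
  simp only [← fullData_eq_iff] at hind
  have hXt : ∀ ω, (∀ i < j, A i ω = ab i) ∧ (∀ i ≤ j, L i ω = lb i) →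
      (XtEq A CL Vv s t v ap xl ω ↔ fullData Vv CL ω ∈ xtEqSet s t ab v ap xl) :=
    fun ω hF => xtEq_iff_fullData_mem (fun i hi => hF.1 i (hi.trans_le hj)) v ap xl
  rw [cpr_congr_of_cond μ fun ω hF => and_congr_right' (hXt ω hF), cpr_congr_of_cond μ hXt]
  exact cpr_and_mem_eq_mul_of_forall_eq μ (fun x => hind x.1 x.2 ab lb hpos) _

/-- Theorem B.1(iv): the SRA in the conventional counterfactual
framework implies the t-specific SRAs. -/
theorem tspecific_SRA
    {Ω 𝒜 ℒ 𝒱 : Type} [Fintype Ω]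
    (μ : Ω → ℝ) (hμ : ∀ ω, 0 ≤ μ ω) (hsum : ∑ ω, μ ω = 1)
    (K s : ℕ) (hs : 1 ≤ s) (hsK : s ≤ K + 1)
    (A : ℕ → Ω → 𝒜) (CL : (ℕ → 𝒜) → ℕ → Ω → ℒ) (L : ℕ → Ω → ℒ) (Vv : Ω → 𝒱)
    (hTO : ∀ (a a' : ℕ → 𝒜) (j : ℕ), (∀ i < j, a i = a' i) → ∀ ω, CL a j ω = CL a' j ω)
    (hcons : ∀ j ω, L j ω = CL (fun i => A i ω) j ω)
    (SRA : ∀ j ≤ K, ∀ (a : 𝒜) (v : 𝒱) (x : (ℕ → 𝒜) → ℕ → ℒ) (ab : ℕ → 𝒜) (lb : ℕ → ℒ),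
      pr μ (fun ω => (∀ i < j, A i ω = ab i) ∧ (∀ i ≤ j, L i ω = lb i)) > 0 →
      cpr μ (fun ω => A j ω = a ∧ (Vv ω = v ∧ ∀ (ar : ℕ → 𝒜) (jj : ℕ), CL ar jj ω = x ar jj))
        (fun ω => (∀ i < j, A i ω = ab i) ∧ (∀ i ≤ j, L i ω = lb i)) =
      cpr μ (fun ω => A j ω = a)
        (fun ω => (∀ i < j, A i ω = ab i) ∧ (∀ i ≤ j, L i ω = lb i)) *
      cpr μ (fun ω => Vv ω = v ∧ ∀ (ar : ℕ → 𝒜) (jj : ℕ), CL ar jj ω = x ar jj)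
        (fun ω => (∀ i < j, A i ω = ab i) ∧ (∀ i ≤ j, L i ω = lb i))) :
    ∀ t, s - 1 ≤ t → t ≤ K → ∀ j, t + 1 - s ≤ j → j ≤ t →
    ∀ (a : 𝒜) (v : 𝒱) (ap : ℕ → 𝒜) (xl : (ℕ → 𝒜) → ℕ → ℒ) (ab : ℕ → 𝒜) (lb : ℕ → ℒ),
      pr μ (tHist A L s t j ab lb) > 0 →
      cpr μ (fun ω => A j ω = a ∧ XtEq A CL Vv s t v ap xl ω) (tHist A L s t j ab lb) =
      cpr μ (fun ω => A j ω = a) (tHist A L s t j ab lb) *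
      cpr μ (XtEq A CL Vv s t v ap xl) (tHist A L s t j ab lb) :=
  tspecific_SRA_general μ K s A CL L Vv SRA
end
end

section
/- (G-computation / identifiability for HRMSM parameters) Suppose consistency, temporal ordering, the SRA, and positivity (every regimen ā(t-s+1,t) compatible with the observed past has positive conditional probability) hold. Then for every t with s-1 ≤ t ≤ K and every regimen ā(t-s+1,t), the mean of the counterfactual outcome Y_{ā(t-s+1,t)}(t+1) is identified by the G-computation formula over the restricted history: E[Y_{ā(t-s+1,t)}(t+1)] = Σ E[Y(t+1) | Ā(t)=(ā(t-s), ā(t-s+1,t)), L̄(t)=l̄(t)] · ∏_{j=t-s+1}^{t} P(L(j)=l(j) | Ā(j-1)=(ā(t-s), ā(t-s+1,j-1)), L̄(j-1)=l̄(j-1)) · P(Ā(t-s)=ā(t-s), L̄(t-s)=l̄(t-s)), where the sum ranges over all values ā(t-s) of the unintervened treatment history, and all values l̄(t) of the covariate history. -/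
open Finset
open scoped Classical

noncomputable section

/-!
Fix the unintervened prefix `ā(t-s)` and let `E_j` be the event that the observed history before
time `j` agrees with `(ā(t-s), ā(t-s+1, j-1))` and with a covariate history `l̄(j-1)`. For
`j ≥ t-s+1` the counterfactual outcome is, on `E_j`, a function of the collection `X` of all
counterfactuals. By the SRA, `X` is independent of `A(j)` given `E_j ∩ {L(j) = l}`, and positivity
makes `{A(j) = ā(j)}` a non-null part of that event, so
`E[Y_ā | E_j, L(j) = l] = E[Y_ā | E_{j+1}]`. Conditioning successively on `L(t-s+1), …, L(t)`
therefore turns `E[Y_ā(t+1)]` into the G-computation sum, and on `E_{t+1}` consistency and temporal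
ordering replace `Y_ā(t+1)` by the observed `Y(t+1)`.
-/

lemma sum_fin_tuple_snoc {β M : Type} [Fintype β] [AddCommMonoid M] {m : ℕ}
    (F : (Fin (m + 1) → β) → M) :
    ∑ f, F f = ∑ f : Fin m → β, ∑ b, F (Fin.snoc f b) := by
  rw [← (Fin.snocEquiv fun _ => β).sum_comp, Fintype.sum_prod_type, sum_comm]
  rfl

def exOn {Ω : Type} [Fintype Ω] (μ : Ω → ℝ) (f : Ω → ℝ) (E : Ω → Prop) : ℝ :=
  ∑ ω, if E ω then f ω * μ ω else 0

section FiniteProbability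

variable {Ω : Type} [Fintype Ω] {μ : Ω → ℝ}

lemma cex_eq_exOn_div (f : Ω → ℝ) (F : Ω → Prop) : cex μ f F = exOn μ f F / pr μ F := rfl

lemma pr_congr {E F : Ω → Prop} (h : ∀ ω, E ω ↔ F ω) : pr μ E = pr μ F := by
  simp only [pr, h]

lemma cpr_congr {B B' F F' : Ω → Prop} (hB : ∀ ω, B ω ↔ B' ω) (hF : ∀ ω, F ω ↔ F' ω) :
    cpr μ B F = cpr μ B' F' := by
  rw [cpr, cpr, pr_congr hF, pr_congr fun ω => and_congr (hB ω) (hF ω)]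

lemma exOn_congr {f g : Ω → ℝ} {E F : Ω → Prop} (hE : ∀ ω, E ω ↔ F ω)
    (hfg : ∀ ω, F ω → f ω = g ω) : exOn μ f E = exOn μ g F :=
  sum_congr rfl fun ω _ => by by_cases h : F ω <;> simp [hE, h, hfg]

lemma cex_congr {f g : Ω → ℝ} {E F : Ω → Prop} (hE : ∀ ω, E ω ↔ F ω)
    (hfg : ∀ ω, F ω → f ω = g ω) : cex μ f E = cex μ g F := by
  rw [cex_eq_exOn_div, cex_eq_exOn_div, exOn_congr hE hfg, pr_congr hE]

lemma ex_eq_exOn_true (f : Ω → ℝ) : ex μ f = exOn μ f (fun _ => True) := by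
  simp [ex, exOn]

section Nonneg

variable (hμ : ∀ ω, 0 ≤ μ ω)
include hμ

lemma pr_nonneg (E : Ω → Prop) : 0 ≤ pr μ E :=
  sum_nonneg fun ω _ => ite_nonneg (hμ ω) le_rfl

lemma pr_eq_zero_of_imp {E F : Ω → Prop} (hEF : ∀ ω, E ω → F ω) (hF : pr μ F = 0) :
    pr μ E = 0 := by
  refine le_antisymm (hF ▸ sum_le_sum fun ω _ => ?_) (pr_nonneg hμ E)
  by_cases hE : E ω
  · simp [hE, hEF ω hE]
  · exact (if_neg hE).trans_le (ite_nonneg (hμ ω) le_rfl)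

lemma exists_pos_of_pr_ne_zero {E : Ω → Prop} (h : pr μ E ≠ 0) : ∃ ω, E ω ∧ 0 < μ ω := by
  obtain ⟨ω, -, hω⟩ := exists_ne_zero_of_sum_ne_zero h
  by_cases hE : E ω
  · rw [if_pos hE] at hω
    exact ⟨ω, hE, (hμ ω).lt_of_ne' hω⟩
  · exact absurd (if_neg hE) hω

lemma exOn_eq_zero_of_pr_eq_zero {E : Ω → Prop} (h : pr μ E = 0) (f : Ω → ℝ) :
    exOn μ f E = 0 := by
  have hzero := (sum_eq_zero_iff_of_nonneg fun ω _ => ?_).1 h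
  · refine sum_eq_zero fun ω hω => ?_
    have := hzero ω hω
    split_ifs at this ⊢ <;> simp [this]
  · exact ite_nonneg (hμ ω) le_rfl

lemma cex_mul_pr (f : Ω → ℝ) (F : Ω → Prop) : cex μ f F * pr μ F = exOn μ f F := by
  rcases eq_or_ne (pr μ F) 0 with h | h
  · rw [h, mul_zero, exOn_eq_zero_of_pr_eq_zero hμ h]
  · exact div_mul_cancel₀ _ h

lemma cpr_mul_pr (B F : Ω → Prop) : cpr μ B F * pr μ F = pr μ (fun ω => B ω ∧ F ω) := by
  rcases eq_or_ne (pr μ F) 0 with h | h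
  · rw [h, mul_zero, pr_eq_zero_of_imp hμ (fun ω hω => hω.2) h]
  · exact div_mul_cancel₀ _ h

lemma cpr_mul_cex (f : Ω → ℝ) (B F : Ω → Prop) :
    cpr μ B F * cex μ f (fun ω => B ω ∧ F ω) = exOn μ f (fun ω => B ω ∧ F ω) / pr μ F := by
  rcases eq_or_ne (pr μ (fun ω => B ω ∧ F ω)) 0 with h | h
  · simp [cpr, h, exOn_eq_zero_of_pr_eq_zero hμ h]
  · rw [cpr, cex_eq_exOn_div]
    field_simp

end Nonneg

lemma sum_exOn_fiberwise {β : Type} (X : Ω → β) (S : Finset β) (hS : ∀ ω, X ω ∈ S)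
    (f : Ω → ℝ) (E : Ω → Prop) : ∑ x ∈ S, exOn μ f (fun ω => X ω = x ∧ E ω) = exOn μ f E := by
  simp only [exOn]
  rw [sum_comm]
  refine sum_congr rfl fun ω _ => ?_
  by_cases hE : E ω
  · simp only [hE, and_true, if_true]
    rw [sum_ite_eq, if_pos (hS ω)]
  · simp [hE]

lemma exOn_comp_fiber {β : Type} (φ : β → ℝ) (X : Ω → β) (x : β) (E : Ω → Prop) :
    exOn μ (fun ω => φ (X ω)) (fun ω => X ω = x ∧ E ω) = φ x * pr μ (fun ω => X ω = x ∧ E ω) := by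
  rw [exOn, pr, mul_sum]
  refine sum_congr rfl fun ω _ => ?_
  split_ifs with h
  · rw [h.1]
  · rw [mul_zero]

def CondIndep {β : Type} (μ : Ω → ℝ) (B : Ω → Prop) (X : Ω → β) (F : Ω → Prop) : Prop :=
  ∀ x, cpr μ (fun ω => B ω ∧ X ω = x) F = cpr μ B F * cpr μ (fun ω => X ω = x) F

section CondIndep

variable {β : Type} {B F : Ω → Prop} {X : Ω → β} (hμ : ∀ ω, 0 ≤ μ ω) (hind : CondIndep μ B X F)
include hμ hind

lemma CondIndep.exOn_and_eq_cpr_mul (φ : β → ℝ) :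
    exOn μ (fun ω => φ (X ω)) (fun ω => B ω ∧ F ω) = cpr μ B F * exOn μ (fun ω => φ (X ω)) F := by
  have hS : ∀ ω, X ω ∈ univ.image X := fun ω => mem_image_of_mem X (mem_univ ω)
  rw [← sum_exOn_fiberwise X _ hS, ← sum_exOn_fiberwise X _ hS, mul_sum]
  refine sum_congr rfl fun x _ => ?_
  rw [exOn_comp_fiber, exOn_comp_fiber, mul_left_comm]
  congr 1
  calc pr μ (fun ω => X ω = x ∧ B ω ∧ F ω)
      = cpr μ (fun ω => B ω ∧ X ω = x) F * pr μ F := by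
        rw [cpr_mul_pr hμ]; exact pr_congr fun ω => by tauto
    _ = cpr μ B F * (cpr μ (fun ω => X ω = x) F * pr μ F) := by rw [hind x, mul_assoc]
    _ = cpr μ B F * pr μ (fun ω => X ω = x ∧ F ω) := by rw [cpr_mul_pr hμ]

lemma CondIndep.cex_and_eq (hB : cpr μ B F ≠ 0) (φ : β → ℝ) :
    cex μ (fun ω => φ (X ω)) (fun ω => B ω ∧ F ω) = cex μ (fun ω => φ (X ω)) F := by
  rw [cex_eq_exOn_div, cex_eq_exOn_div, hind.exOn_and_eq_cpr_mul hμ, ← cpr_mul_pr hμ,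
    mul_div_mul_left _ _ hB]

end CondIndep

end FiniteProbability

section History

variable {Ω 𝒜 ℒ : Type}

def histEvent (A : ℕ → Ω → 𝒜) (L : ℕ → Ω → ℒ) (a : ℕ → 𝒜) (l : ℕ → ℒ) (j : ℕ) : Ω → Prop :=
  fun ω => (∀ i < j, A i ω = a i) ∧ ∀ i ≤ j, L i ω = l i

/-- Only the entries of `lb` below `j` are constrained, so a single `lb : Fin (t + 1) → ℒ` indexes
the events of all times `j ≤ t + 1`. -/
def prefixEvent (A : ℕ → Ω → 𝒜) (L : ℕ → Ω → ℒ) {n : ℕ} (a : ℕ → 𝒜) (lb : Fin n → ℒ)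
    (j : ℕ) : Ω → Prop :=
  fun ω => (∀ i < j, A i ω = a i) ∧ ∀ i : Fin n, (i : ℕ) < j → L i ω = lb i

variable {A : ℕ → Ω → 𝒜} {L : ℕ → Ω → ℒ} {a : ℕ → 𝒜}

lemma histEvent_iff_of_mem {l : ℕ → ℒ} {j : ℕ} {ω : Ω} (hω : histEvent A L a l j ω) (ω' : Ω) :
    histEvent A L a l j ω' ↔ histEvent A L (A · ω) (L · ω) j ω' := by
  constructor <;> rintro ⟨hA, hL⟩
  · exact ⟨fun i hi => (hA i hi).trans (hω.1 i hi).symm,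
      fun i hi => (hL i hi).trans (hω.2 i hi).symm⟩
  · exact ⟨fun i hi => (hA i hi).trans (hω.1 i hi), fun i hi => (hL i hi).trans (hω.2 i hi)⟩

lemma prefixEvent_snoc {m j : ℕ} (hj : j ≤ m) (lb : Fin m → ℒ) (l : ℒ) :
    prefixEvent A L a (Fin.snoc lb l : Fin (m + 1) → ℒ) j = prefixEvent A L a lb j := by
  ext ω
  simp only [prefixEvent, Fin.forall_fin_succ', Fin.snoc_castSucc, Fin.snoc_last,
    Fin.val_castSucc, Fin.val_last, Nat.not_lt.2 hj, false_imp_iff, and_true]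

lemma prefixEvent_succ_snoc_iff {m : ℕ} (lb : Fin m → ℒ) (l : ℒ) (ω : Ω) :
    prefixEvent A L a (Fin.snoc lb l : Fin (m + 1) → ℒ) (m + 1) ω ↔
      A m ω = a m ∧ L m ω = l ∧ prefixEvent A L a lb m ω := by
  simp only [prefixEvent, Fin.forall_fin_succ', Fin.snoc_castSucc, Fin.snoc_last,
    Fin.val_castSucc, Fin.val_last, Nat.forall_lt_succ_right, Fin.is_lt,
    forall_const]
  tauto

lemma and_prefixEvent_iff_histEvent {m : ℕ} (lb : Fin m → ℒ) (l : ℒ) (ω : Ω) :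
    L m ω = l ∧ prefixEvent A L a lb m ω ↔
      histEvent A L a (fun i => if h : i < m then lb ⟨i, h⟩ else l) m ω := by
  simp +contextual only [prefixEvent, histEvent, ← Nat.lt_succ_iff, Nat.forall_lt_succ_right,
    Fin.forall_iff, dif_pos, lt_irrefl, dif_neg, not_false_eq_true, forall_const]
  tauto

end History

section GFormula

variable {Ω 𝒜 ℒ : Type} [Fintype Ω]

def SeqRandomization (μ : Ω → ℝ) (A : ℕ → Ω → 𝒜) (CL : (ℕ → 𝒜) → ℕ → Ω → ℒ)
    (L : ℕ → Ω → ℒ) (K : ℕ) : Prop :=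
  ∀ j ≤ K, ∀ (α : 𝒜) (x : (ℕ → 𝒜) → ℕ → ℒ) (a : ℕ → 𝒜) (l : ℕ → ℒ),
    pr μ (histEvent A L a l j) > 0 →
    cpr μ (fun ω => A j ω = α ∧ ∀ (ar : ℕ → 𝒜) (jj : ℕ), CL ar jj ω = x ar jj)
        (histEvent A L a l j) =
      cpr μ (fun ω => A j ω = α) (histEvent A L a l j) *
        cpr μ (fun ω => ∀ (ar : ℕ → 𝒜) (jj : ℕ), CL ar jj ω = x ar jj) (histEvent A L a l j)

def Positivity (μ : Ω → ℝ) (A : ℕ → Ω → 𝒜) (L : ℕ → Ω → ℒ) (j : ℕ) (α : 𝒜) : Prop :=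
  ∀ ω, 0 < μ ω → 0 < cpr μ (fun ω' => A j ω' = α) (histEvent A L (A · ω) (L · ω) j)

variable {μ : Ω → ℝ} (hμ : ∀ ω, 0 ≤ μ ω) {A : ℕ → Ω → 𝒜} {CL : (ℕ → 𝒜) → ℕ → Ω → ℒ}
  {L : ℕ → Ω → ℒ} {K : ℕ}
include hμ

lemma SeqRandomization.condIndep (hSRA : SeqRandomization μ A CL L K) {j : ℕ} (hj : j ≤ K)
    (α : 𝒜) (a : ℕ → 𝒜) (l : ℕ → ℒ) :
    CondIndep μ (fun ω => A j ω = α) (fun ω ar jj => CL ar jj ω) (histEvent A L a l j) := by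
  intro x
  rcases (pr_nonneg hμ (histEvent A L a l j)).eq_or_lt with h | h
  · simp [cpr, ← h]
  · simpa only [funext_iff] using hSRA j hj α x a l h

lemma Positivity.cpr_ne_zero {j : ℕ} {α : 𝒜} (hpos : Positivity μ A L j α)
    {a : ℕ → 𝒜} {l : ℕ → ℒ} (h : pr μ (histEvent A L a l j) ≠ 0) :
    cpr μ (fun ω => A j ω = α) (histEvent A L a l j) ≠ 0 := by
  obtain ⟨ω, hω, hμω⟩ := exists_pos_of_pr_ne_zero hμ h
  rw [cpr_congr (fun _ => Iff.rfl) (histEvent_iff_of_mem hω)]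
  exact (hpos ω hμω).ne'

lemma cex_eq_sum_cpr_mul_cex [Fintype ℒ] (hSRA : SeqRandomization μ A CL L K) {m : ℕ}
    (hm : m ≤ K) {a : ℕ → 𝒜} (hpos : Positivity μ A L m (a m))
    (φ : ((ℕ → 𝒜) → ℕ → ℒ) → ℝ) (lb : Fin m → ℒ) :
    cex μ (fun ω => φ fun ar jj => CL ar jj ω) (prefixEvent A L a lb m) =
      ∑ l, cpr μ (fun ω => L m ω = l) (prefixEvent A L a lb m) *
        cex μ (fun ω => φ fun ar jj => CL ar jj ω)
          (prefixEvent A L a (Fin.snoc lb l : Fin (m + 1) → ℒ) (m + 1)) := by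
  have hterm : ∀ l, cpr μ (fun ω => L m ω = l) (prefixEvent A L a lb m) *
      cex μ (fun ω => φ fun ar jj => CL ar jj ω)
        (prefixEvent A L a (Fin.snoc lb l : Fin (m + 1) → ℒ) (m + 1)) =
      exOn μ (fun ω => φ fun ar jj => CL ar jj ω)
        (fun ω => L m ω = l ∧ prefixEvent A L a lb m ω) / pr μ (prefixEvent A L a lb m) := by
    intro l
    rw [← cpr_mul_cex hμ]
    -- `{L m = l} ∩ prefixEvent … m` is an SRA conditioning event, and `prefixEvent … (m + 1)`
    -- is its intersection with `{A m = a m}`.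
    have hH := and_prefixEvent_iff_histEvent (A := A) (L := L) (a := a) lb l
    rcases eq_or_ne (pr μ (histEvent A L a (fun i => if h : i < m then lb ⟨i, h⟩ else l) m)) 0
      with h | h
    · rw [cpr, pr_congr hH, h, zero_div, zero_mul, zero_mul]
    · congr 1
      rw [cex_congr (fun ω => (prefixEvent_succ_snoc_iff lb l ω).trans
          (and_congr_right' (hH ω))) fun _ _ => rfl, cex_congr hH fun _ _ => rfl]
      exact (hSRA.condIndep hμ hm (a m) a _).cex_and_eq hμ
        (hpos.cpr_ne_zero hμ h) φ
  rw [sum_congr rfl fun l _ => hterm l, ← sum_div,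
    sum_exOn_fiberwise (L m) univ (fun _ => mem_univ _), cex_eq_exOn_div]

lemma sum_cex_mul_prod_cpr_mul_pr [Fintype ℒ] (hSRA : SeqRandomization μ A CL L K)
    {m₀ m : ℕ} (hm₀ : m₀ ≤ m) (hm : m ≤ K + 1) {a : ℕ → 𝒜}
    (hpos : ∀ j, m₀ ≤ j → j < m → Positivity μ A L j (a j))
    (φ : ((ℕ → 𝒜) → ℕ → ℒ) → ℝ) :
    ∑ lb : Fin m → ℒ, cex μ (fun ω => φ fun ar jj => CL ar jj ω) (prefixEvent A L a lb m) *
        (∏ j ∈ univ.filter (fun j : Fin m => m₀ ≤ j.1),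
          cpr μ (fun ω => L j ω = lb j) (prefixEvent A L a lb j)) *
        pr μ (prefixEvent A L a lb m₀) =
      ∑ lb : Fin m₀ → ℒ, exOn μ (fun ω => φ fun ar jj => CL ar jj ω) (prefixEvent A L a lb m₀) := by
  induction m, hm₀ using Nat.le_induction with
  | base =>
    refine sum_congr rfl fun lb _ => ?_
    rw [filter_false_of_mem fun j _ => Nat.not_le.2 j.2, prod_empty, mul_one, cex_mul_pr hμ]
  | succ m hm₀ ih =>
    rw [← ih (by omega) fun j h₁ h₂ => hpos j h₁ (by omega), sum_fin_tuple_snoc]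
    refine sum_congr rfl fun lb _ => ?_
    rw [cex_eq_sum_cpr_mul_cex hμ hSRA (by omega) (hpos m hm₀ (by omega)), sum_mul, sum_mul]
    refine sum_congr rfl fun l _ => ?_
    have hpre : ∀ j : Fin m, prefixEvent A L a (Fin.snoc lb l : Fin (m + 1) → ℒ) j =
        prefixEvent A L a lb j := fun j => prefixEvent_snoc j.2.le lb l
    simp only [prod_filter, Fin.prod_univ_castSucc, Fin.snoc_castSucc, Fin.snoc_last,
      Fin.val_castSucc, Fin.val_last, if_pos hm₀, hpre, prefixEvent_snoc hm₀,
      prefixEvent_snoc le_rfl]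
    ring

end GFormula

section Splice

variable {𝒜 : Type} {m₀ : ℕ}

def splice (ap : Fin m₀ → 𝒜) (ab : ℕ → 𝒜) : ℕ → 𝒜 :=
  fun i => if h : i < m₀ then ap ⟨i, h⟩ else ab i

lemma splice_of_lt (ap : Fin m₀ → 𝒜) (ab : ℕ → 𝒜) {i : ℕ} (h : i < m₀) :
    splice ap ab i = ap ⟨i, h⟩ := dif_pos h

lemma splice_of_le (ap : Fin m₀ → 𝒜) (ab : ℕ → 𝒜) {i : ℕ} (h : m₀ ≤ i) :
    splice ap ab i = ab i := dif_neg (not_lt.2 h)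

variable {Ω ℒ : Type} {A : ℕ → Ω → 𝒜} {L : ℕ → Ω → ℒ} {ap : Fin m₀ → 𝒜} {ab : ℕ → 𝒜}
  {n : ℕ} {lb : Fin n → ℒ} {ω : Ω}

lemma prefixEvent_splice_iff {j : ℕ} (hj : m₀ ≤ j) :
    prefixEvent A L (splice ap ab) lb j ω ↔
      (∀ i : Fin m₀, A i ω = ap i) ∧ (∀ i : ℕ, m₀ ≤ i → i < j → A i ω = ab i) ∧
        ∀ i : Fin n, (i : ℕ) < j → L i ω = lb i := by
  rw [prefixEvent, ← and_assoc]
  refine and_congr_left fun _ => ⟨fun h => ⟨fun i => ?_, fun i h₁ h₂ => ?_⟩, fun h i hi => ?_⟩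
  · rw [h i (i.2.trans_le hj), splice_of_lt]
  · rw [h i h₂, splice_of_le _ _ h₁]
  · rcases lt_or_ge i m₀ with him | him
    · rw [splice_of_lt _ _ him]; exact h.1 ⟨i, him⟩
    · rw [splice_of_le _ _ him]; exact h.2 i him hi

lemma prefixEvent_splice_iff_self :
    prefixEvent A L (splice ap ab) lb m₀ ω ↔
      (∀ i : Fin m₀, A i ω = ap i) ∧ ∀ i : Fin n, (i : ℕ) < m₀ → L i ω = lb i := by
  rw [prefixEvent_splice_iff le_rfl]
  exact and_congr_right fun _ => and_iff_right fun i h₁ h₂ => absurd h₂ (not_lt.2 h₁)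

lemma ite_eq_splice_of_prefixEvent (h : prefixEvent A L (splice ap ab) lb m₀ ω) :
    (fun i => if i < m₀ then A i ω else ab i) = splice ap ab := by
  funext i
  rcases lt_or_ge i m₀ with hi | hi
  · rw [if_pos hi, h.1 i hi]
  · rw [if_neg (not_lt.2 hi), splice_of_le _ _ hi]

end Splice

lemma counterfactual_eq_of_forall_lt {Ω 𝒜 ℒ : Type} {A : ℕ → Ω → 𝒜}
    {CL : (ℕ → 𝒜) → ℕ → Ω → ℒ} {L : ℕ → Ω → ℒ}
    (hTO : ∀ (a a' : ℕ → 𝒜) (j : ℕ), (∀ i < j, a i = a' i) → ∀ ω, CL a j ω = CL a' j ω)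
    (hcons : ∀ j ω, L j ω = CL (fun i => A i ω) j ω) {a : ℕ → 𝒜} {j : ℕ} {ω : Ω}
    (h : ∀ i < j, A i ω = a i) : CL a j ω = L j ω := by
  rw [hcons, hTO a _ j fun i hi => (h i hi).symm]

lemma ex_eq_sum_exOn_prefixEvent {Ω 𝒜 ℒ : Type} [Fintype Ω] [Fintype 𝒜] [Fintype ℒ]
    (μ : Ω → ℝ) (A : ℕ → Ω → 𝒜) (L : ℕ → Ω → ℒ) (m₀ : ℕ) (ab : ℕ → 𝒜) (f : Ω → ℝ) :
    ex μ f = ∑ ap : Fin m₀ → 𝒜, ∑ lb : Fin m₀ → ℒ,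
      exOn μ f (prefixEvent A L (splice ap ab) lb m₀) := by
  rw [ex_eq_exOn_true, ← sum_exOn_fiberwise
    (fun ω => ((fun i : Fin m₀ => A i ω), fun i : Fin m₀ => L i ω)) univ (fun _ => mem_univ _),
    Fintype.sum_prod_type]
  refine sum_congr rfl fun ap _ => sum_congr rfl fun lb _ => exOn_congr (fun ω => ?_) fun _ _ => rfl
  simp only [prefixEvent_splice_iff_self, Prod.mk.injEq, funext_iff, Fin.is_lt, forall_const,
    and_true]

theorem hrmsm_gcomputation_general
    {Ω 𝒜 ℒ : Type} [Fintype Ω] [Fintype 𝒜] [Fintype ℒ]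
    (μ : Ω → ℝ) (hμ : ∀ ω, 0 ≤ μ ω)
    (K s : ℕ)
    (A : ℕ → Ω → 𝒜) (CL : (ℕ → 𝒜) → ℕ → Ω → ℒ) (L : ℕ → Ω → ℒ) (Y : ℒ → ℝ)
    (hTO : ∀ (a a' : ℕ → 𝒜) (j : ℕ), (∀ i < j, a i = a' i) → ∀ ω, CL a j ω = CL a' j ω)
    (hcons : ∀ j ω, L j ω = CL (fun i => A i ω) j ω)
    (SRA : ∀ j ≤ K, ∀ (a : 𝒜) (x : (ℕ → 𝒜) → ℕ → ℒ) (ab : ℕ → 𝒜) (lb : ℕ → ℒ),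
      pr μ (fun ω => (∀ i < j, A i ω = ab i) ∧ (∀ i ≤ j, L i ω = lb i)) > 0 →
      cpr μ (fun ω => A j ω = a ∧ ∀ (ar : ℕ → 𝒜) (jj : ℕ), CL ar jj ω = x ar jj)
        (fun ω => (∀ i < j, A i ω = ab i) ∧ (∀ i ≤ j, L i ω = lb i)) =
      cpr μ (fun ω => A j ω = a)
        (fun ω => (∀ i < j, A i ω = ab i) ∧ (∀ i ≤ j, L i ω = lb i)) *
      cpr μ (fun ω => ∀ (ar : ℕ → 𝒜) (jj : ℕ), CL ar jj ω = x ar jj)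
        (fun ω => (∀ i < j, A i ω = ab i) ∧ (∀ i ≤ j, L i ω = lb i)))
    (t : ℕ) (ht2 : t ≤ K) (ab : ℕ → 𝒜)
    (POS : ∀ j, t + 1 - s ≤ j → j ≤ t → ∀ ω, μ ω > 0 →
      cpr μ (fun ω' => A j ω' = ab j)
        (fun ω' => (∀ i < j, A i ω' = A i ω) ∧ (∀ i ≤ j, L i ω' = L i ω)) > 0) :
    ex μ (fun ω => Y (CL (fun i => if i < t + 1 - s then A i ω else ab i) (t + 1) ω)) =
    ∑ ap : Fin (t + 1 - s) → 𝒜, ∑ lb : Fin (t + 1) → ℒ,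
      cex μ (fun ω => Y (L (t + 1) ω))
        (fun ω => (∀ i : Fin (t + 1 - s), A i.1 ω = ap i) ∧
          (∀ i : ℕ, t + 1 - s ≤ i → i ≤ t → A i ω = ab i) ∧
          (∀ i : Fin (t + 1), L i.1 ω = lb i)) *
      (∏ j ∈ Finset.univ.filter (fun j : Fin (t + 1) => t + 1 - s ≤ j.1),
        cpr μ (fun ω => L j.1 ω = lb j)
          (fun ω => (∀ i : Fin (t + 1 - s), A i.1 ω = ap i) ∧
            (∀ i : ℕ, t + 1 - s ≤ i → i < j.1 → A i ω = ab i) ∧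
            (∀ i : Fin (t + 1), i.1 < j.1 → L i.1 ω = lb i))) *
      pr μ (fun ω => (∀ i : Fin (t + 1 - s), A i.1 ω = ap i) ∧
        (∀ i : Fin (t + 1), i.1 < t + 1 - s → L i.1 ω = lb i)) := by
  rw [ex_eq_sum_exOn_prefixEvent μ A L (t + 1 - s) ab]
  refine sum_congr rfl fun ap _ => ?_
  have hpos : ∀ j, t + 1 - s ≤ j → j < t + 1 → Positivity μ A L j (splice ap ab j) :=
    fun j h₁ h₂ => by rw [splice_of_le _ _ h₁]; exact POS j h₁ (by omega)
  refine (sum_congr rfl fun lb _ => exOn_congr (fun _ => Iff.rfl) fun ω h => ?_).trans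
    ((sum_cex_mul_prod_cpr_mul_pr hμ SRA (by omega) (by omega) hpos
      fun x => Y (x (splice ap ab) (t + 1))).symm.trans (sum_congr rfl fun lb _ => ?_))
  · rw [ite_eq_splice_of_prefixEvent h]
  have hY : ∀ ω, prefixEvent A L (splice ap ab) lb (t + 1) ω →
      Y (CL (splice ap ab) (t + 1) ω) = Y (L (t + 1) ω) :=
    fun ω h => congrArg Y (counterfactual_eq_of_forall_lt hTO hcons h.1)
  rw [cex_congr (fun _ => Iff.rfl) hY]
  congr 2
  · refine cex_congr (fun ω => ?_) fun _ _ => rfl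
    simp only [prefixEvent_splice_iff (Nat.sub_le (t + 1) s), Nat.lt_succ_iff, Fin.is_le,
      forall_const]
  · exact prod_congr rfl fun j hj => cpr_congr (fun _ => Iff.rfl) fun ω =>
      prefixEvent_splice_iff (mem_filter.1 hj).2
  · exact funext fun ω => propext prefixEvent_splice_iff_self

/-- G-computation identifiability for HRMSM parameters. Under
consistency, temporal ordering, SRA and positivity, the mean of the
history-restricted counterfactual outcome `Y_{ā(t-s+1,t)}(t+1)` is given by the
G-computation formula over the restricted history. -/
theorem hrmsm_gcomputation
    {Ω 𝒜 ℒ : Type} [Fintype Ω] [Fintype 𝒜] [Fintype ℒ]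
    (μ : Ω → ℝ) (hμ : ∀ ω, 0 ≤ μ ω) (hsum : ∑ ω, μ ω = 1)
    (K s : ℕ) (hs : 1 ≤ s) (hsK : s ≤ K + 1)
    (A : ℕ → Ω → 𝒜) (CL : (ℕ → 𝒜) → ℕ → Ω → ℒ) (L : ℕ → Ω → ℒ) (Y : ℒ → ℝ)
    (hTO : ∀ (a a' : ℕ → 𝒜) (j : ℕ), (∀ i < j, a i = a' i) → ∀ ω, CL a j ω = CL a' j ω)
    (hcons : ∀ j ω, L j ω = CL (fun i => A i ω) j ω)
    (SRA : ∀ j ≤ K, ∀ (a : 𝒜) (x : (ℕ → 𝒜) → ℕ → ℒ) (ab : ℕ → 𝒜) (lb : ℕ → ℒ),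
      pr μ (fun ω => (∀ i < j, A i ω = ab i) ∧ (∀ i ≤ j, L i ω = lb i)) > 0 →
      cpr μ (fun ω => A j ω = a ∧ ∀ (ar : ℕ → 𝒜) (jj : ℕ), CL ar jj ω = x ar jj)
        (fun ω => (∀ i < j, A i ω = ab i) ∧ (∀ i ≤ j, L i ω = lb i)) =
      cpr μ (fun ω => A j ω = a)
        (fun ω => (∀ i < j, A i ω = ab i) ∧ (∀ i ≤ j, L i ω = lb i)) *
      cpr μ (fun ω => ∀ (ar : ℕ → 𝒜) (jj : ℕ), CL ar jj ω = x ar jj)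
        (fun ω => (∀ i < j, A i ω = ab i) ∧ (∀ i ≤ j, L i ω = lb i)))
    (t : ℕ) (ht1 : s - 1 ≤ t) (ht2 : t ≤ K) (ab : ℕ → 𝒜)
    (POS : ∀ j, t + 1 - s ≤ j → j ≤ t → ∀ ω, μ ω > 0 →
      cpr μ (fun ω' => A j ω' = ab j)
        (fun ω' => (∀ i < j, A i ω' = A i ω) ∧ (∀ i ≤ j, L i ω' = L i ω)) > 0) :
    ex μ (fun ω => Y (CL (fun i => if i < t + 1 - s then A i ω else ab i) (t + 1) ω)) =
    ∑ ap : Fin (t + 1 - s) → 𝒜, ∑ lb : Fin (t + 1) → ℒ,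
      cex μ (fun ω => Y (L (t + 1) ω))
        (fun ω => (∀ i : Fin (t + 1 - s), A i.1 ω = ap i) ∧
          (∀ i : ℕ, t + 1 - s ≤ i → i ≤ t → A i ω = ab i) ∧
          (∀ i : Fin (t + 1), L i.1 ω = lb i)) *
      (∏ j ∈ Finset.univ.filter (fun j : Fin (t + 1) => t + 1 - s ≤ j.1),
        cpr μ (fun ω => L j.1 ω = lb j)
          (fun ω => (∀ i : Fin (t + 1 - s), A i.1 ω = ap i) ∧
            (∀ i : ℕ, t + 1 - s ≤ i → i < j.1 → A i ω = ab i) ∧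
            (∀ i : Fin (t + 1), i.1 < j.1 → L i.1 ω = lb i))) *
      pr μ (fun ω => (∀ i : Fin (t + 1 - s), A i.1 ω = ap i) ∧
        (∀ i : Fin (t + 1), i.1 < t + 1 - s → L i.1 ω = lb i)) :=
  hrmsm_gcomputation_general μ hμ K s A CL L Y hTO hcons SRA t ht2 ab POS
end
end
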